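/- Assume that the cost per stage g is bounded over X×U×W and that there exists a uniformly proper policy. If {J_k} is the sequence generated by the value iteration algorithm J_{k+1}(x) = inf_{u ∈ U(x)} E_{w~P(·|x,u)}[ g(x,u,w) + J_k(f(x,u,w)) ] starting from any J₀ ∈ B with J₀ ≥ Ĵ, then J_k(x) → Ĵ(x) for every x ∈ X. -/

import Mathlib

open scoped ENNReal
open Filter
open scoped Classical NNReal

/-- A stochastic shortest path (SSP) problem with state space `X`, control space `U`,
countable disturbance space `W`, a cost-free absorbing termination state `t`,
nonempty control constraint sets `Uc x ⊆ U`, disturbance distributions `P x u`,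
system function `f`, and nonnegative (finite-valued) cost per stage `g`. -/
structure SSP (X U W : Type*) [Countable W] where
  t : X
  Uc : X → Set U
  Uc_nonempty : ∀ x, (Uc x).Nonempty
  P : X → U → PMF W
  f : X → U → W → X
  g : X → U → W → ℝ≥0∞
  g_lt_top : ∀ x u w, g x u w < ⊤
  f_absorb : ∀ u ∈ Uc t, ∀ w, f t u w = t
  g_zero : ∀ u ∈ Uc t, ∀ w, g t u w = 0

namespace SSP

variable {X U W : Type*} [Countable W] (S : SSP X U W)

/-- A policy `π = (μ₀, μ₁, …)` is admissible if `μ_k(x) ∈ U(x)` for all `k, x`. -/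
def IsPolicy (π : ℕ → X → U) : Prop := ∀ k x, π k x ∈ S.Uc x

/-- Distribution of the state `x_k` after `k` steps under policy `π` starting from `x₀`. -/
noncomputable def stateDist (π : ℕ → X → U) (x₀ : X) : ℕ → PMF X
  | 0 => PMF.pure x₀
  | k + 1 => (stateDist π x₀ k).bind fun x => (S.P x (π k x)).map (S.f x (π k x))

/-- Expected value `E^π_{x₀}[J(x_k)]` of a nonnegative function along the trajectory. -/
noncomputable def expect (π : ℕ → X → U) (x₀ : X) (k : ℕ) (J : X → ℝ≥0∞) : ℝ≥0∞ :=
  ∑' x, S.stateDist π x₀ k x * J x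

/-- Expected cost `E^π_{x₀}[g(x_k, μ_k(x_k), w_k)]` of the `k`-th stage. -/
noncomputable def stageCost (π : ℕ → X → U) (x₀ : X) (k : ℕ) : ℝ≥0∞ :=
  S.expect π x₀ k fun x => ∑' w, S.P x (π k x) w * S.g x (π k x) w

/-- The cost `J_π(x₀) = Σ_{k≥0} E^π_{x₀}[g(x_k, μ_k(x_k), w_k)]` of a policy. -/
noncomputable def Jcost (π : ℕ → X → U) (x₀ : X) : ℝ≥0∞ :=
  ∑' k, S.stageCost π x₀ k

/-- `r_k(π, x₀)`: probability that `x_k ≠ t` under `π` starting from `x₀`. -/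
noncomputable def r (π : ℕ → X → U) (x₀ : X) (k : ℕ) : ℝ≥0∞ :=
  S.expect π x₀ k fun x => if x = S.t then 0 else 1

/-- `Σ_{k≥0} r_k(π,x₀)`: expected number of steps to reach the destination. -/
noncomputable def N (π : ℕ → X → U) (x₀ : X) : ℝ≥0∞ := ∑' k, S.r π x₀ k

/-- A policy is proper at `x` if it is admissible, `J_π(x) < ∞` and `Σ_k r_k(π,x) < ∞`. -/
def ProperAt (π : ℕ → X → U) (x : X) : Prop :=
  S.IsPolicy π ∧ S.Jcost π x < ⊤ ∧ S.N π x < ⊤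

/-- The optimal cost function `J*`. -/
noncomputable def Jstar (x : X) : ℝ≥0∞ := ⨅ π ∈ {π | S.IsPolicy π}, S.Jcost π x

/-- The restricted optimal cost function `Ĵ` over policies proper at `x`
(infimum over the empty set is `∞`). -/
noncomputable def Jhat (x : X) : ℝ≥0∞ := ⨅ π ∈ {π | S.ProperAt π x}, S.Jcost π x

/-- The effective domain `X̂ = {x | Ĵ(x) < ∞}` of `Ĵ`. -/
def Xhat : Set X := {x | S.Jhat x < ⊤}

/-- Expected `k`-th stage cost in the `δ`-perturbed problem (stage cost `g + δ` off `t`). -/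
noncomputable def stageCostPert (δ : ℝ≥0∞) (π : ℕ → X → U) (x₀ : X) (k : ℕ) : ℝ≥0∞ :=
  S.expect π x₀ k fun x =>
    ∑' w, S.P x (π k x) w * (S.g x (π k x) w + if x = S.t then 0 else δ)

/-- The cost `J_{π,δ}` of a policy in the `δ`-perturbed problem. -/
noncomputable def Jpert (δ : ℝ≥0∞) (π : ℕ → X → U) (x₀ : X) : ℝ≥0∞ :=
  ∑' k, S.stageCostPert δ π x₀ k

/-- The optimal cost function `Ĵ_δ` of the `δ`-perturbed problem. -/
noncomputable def JhatPert (δ : ℝ≥0∞) (x : X) : ℝ≥0∞ :=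
  ⨅ π ∈ {π | S.IsPolicy π}, S.Jpert δ π x

/-- `Q J x u = E_{w∼P(·|x,u)}[g(x,u,w) + J(f(x,u,w))]`. -/
noncomputable def Q (J : X → ℝ≥0∞) (x : X) (u : U) : ℝ≥0∞ :=
  ∑' w, S.P x u w * (S.g x u w + J (S.f x u w))

/-- The Bellman operator `(TJ)(x) = inf_{u ∈ U(x)} E[g(x,u,w) + J(f(x,u,w))]`. -/
noncomputable def bellman (J : X → ℝ≥0∞) (x : X) : ℝ≥0∞ := ⨅ u ∈ S.Uc x, S.Q J x u

/-- The tail policy `π_k = (μ_k, μ_{k+1}, …)`. -/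
def tail (π : ℕ → X → U) (k : ℕ) : ℕ → X → U := fun m => π (k + m)

/-- The set `Ŵ` of functions `J` with `J(t) = 0`, `Ĵ ≤ J`, and
`E^π_{x₀}[J(x_k)] → 0` for every pair `(π, x₀)` with `π` proper at `x₀`. -/
def What : Set (X → ℝ≥0∞) :=
  {J | J S.t = 0 ∧ S.Jhat ≤ J ∧
    ∀ π x₀, S.ProperAt π x₀ → Tendsto (fun k => S.expect π x₀ k J) atTop (nhds 0)}

/-- The set `B` of functions `J` with `J(t) = 0` that are bounded over `X̂`. -/
def Bset : Set (X → ℝ≥0∞) :=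
  {J | J S.t = 0 ∧ (⨆ x ∈ S.Xhat, J x) < ⊤}

/-- A policy is uniformly proper if it is admissible and the expected number of steps
to reach the destination is uniformly bounded over `X̂`. -/
def UniformlyProper (π : ℕ → X → U) : Prop :=
  S.IsPolicy π ∧ (⨆ x ∈ S.Xhat, S.N π x) < ⊤

/-- The cost per stage `g` is (uniformly) bounded over `X × U × W`. -/
def BoundedCost : Prop := ∃ b : ℝ≥0∞, b < ⊤ ∧ ∀ x u w, S.g x u w ≤ b

end SSP

/-!
Value iteration is monotone, so `Ĵ ≤ J₀` propagates to `Ĵ ≤ J_k` once `Ĵ ≤ T Ĵ`. That inequality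
comes from the `δ`-perturbed problem (extra cost `δ` per stage away from `t`): its optimal cost
`Ĵ_δ` over all policies satisfies `Ĵ_δ ≤ Q Ĵ_δ + δ`, its `ε`-optimal policies are proper, so
`Ĵ ≤ Ĵ_δ`, and `Ĵ_δ ↓ Ĵ` as `δ ↓ 0`. Conversely, for a policy `π` proper at `x`, `J_k(x)` is at most
the `k`-stage cost of `π` plus `E[J₀(x_k)] ≤ (sup_{X̂} J₀) r_k(π, x) → 0`, so
`limsup J_k(x) ≤ J_π(x)`.
-/

namespace PMF

variable {α β : Type*}

lemma tsum_mul_const (p : PMF α) (c : ℝ≥0∞) : ∑' a, p a * c = c := by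
  rw [ENNReal.tsum_mul_right, p.tsum_coe, one_mul]

lemma tsum_pure_mul (a : α) (h : α → ℝ≥0∞) : ∑' b, pure a b * h b = h a := by
  simp [pure_apply]

lemma tsum_bind_mul (p : PMF α) (q : α → PMF β) (h : β → ℝ≥0∞) :
    ∑' b, p.bind q b * h b = ∑' a, p a * ∑' b, q a b * h b := by
  simp_rw [bind_apply, ← ENNReal.tsum_mul_right, ← ENNReal.tsum_mul_left, mul_assoc]
  exact ENNReal.tsum_comm

lemma tsum_map_mul (p : PMF α) (φ : α → β) (h : β → ℝ≥0∞) :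
    ∑' b, p.map φ b * h b = ∑' a, p a * h (φ a) := by
  simp_rw [← bind_pure_comp, tsum_bind_mul, Function.comp_apply, tsum_pure_mul]

end PMF

lemma ENNReal.tsum_iInf_of_antitone {ι : Type*} {F : ℕ → ι → ℝ≥0∞} (hF : Antitone F)
    (h0 : ∑' i, F 0 i ≠ ⊤) : ∑' i, ⨅ n, F n i = ⨅ n, ∑' i, F n i := by
  let _ : MeasurableSpace ι := ⊤
  simpa only [MeasureTheory.lintegral_count] using
    MeasureTheory.lintegral_iInf (μ := .count) (fun _ => measurable_from_top) hF
      (by rwa [MeasureTheory.lintegral_count])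

namespace SSP

variable {X U W : Type*} [Countable W] (S : SSP X U W)

noncomputable def gbar (x : X) (u : U) : ℝ≥0∞ := ∑' w, S.P x u w * S.g x u w

noncomputable def nextExp (J : X → ℝ≥0∞) (x : X) (u : U) : ℝ≥0∞ :=
  ∑' w, S.P x u w * J (S.f x u w)

noncomputable def stageExp (c : X → U → ℝ≥0∞) (π : ℕ → X → U) (x : X) (k : ℕ) : ℝ≥0∞ :=
  S.expect π x k fun y => c y (π k y)

noncomputable def totalExp (c : X → U → ℝ≥0∞) (π : ℕ → X → U) (x : X) : ℝ≥0∞ :=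
  ∑' k, S.stageExp c π x k

noncomputable def Qpert (δ : ℝ≥0∞) (J : X → ℝ≥0∞) (x : X) (u : U) : ℝ≥0∞ :=
  S.Q J x u + if x = S.t then 0 else δ

lemma nextExp_mono {J J' : X → ℝ≥0∞} (h : J ≤ J') (x : X) (u : U) :
    S.nextExp J x u ≤ S.nextExp J' x u :=
  ENNReal.tsum_le_tsum fun _ => mul_le_mul_right (h _) _

lemma nextExp_add_const (J : X → ℝ≥0∞) (c : ℝ≥0∞) (x : X) (u : U) :
    S.nextExp (fun y => J y + c) x u = S.nextExp J x u + c := by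
  simp only [nextExp, mul_add, ENNReal.tsum_add, PMF.tsum_mul_const]

lemma tsum_nextExp (h : ℕ → X → ℝ≥0∞) (x : X) (u : U) :
    ∑' k, S.nextExp (h k) x u = S.nextExp (fun y => ∑' k, h k y) x u := by
  simp only [nextExp, ← ENNReal.tsum_mul_left]
  exact ENNReal.tsum_comm

lemma Q_eq_gbar_add_nextExp (J : X → ℝ≥0∞) (x : X) (u : U) :
    S.Q J x u = S.gbar x u + S.nextExp J x u := by
  simp only [Q, gbar, nextExp, mul_add, ENNReal.tsum_add]

lemma Q_mono {J J' : X → ℝ≥0∞} (h : J ≤ J') (x : X) (u : U) : S.Q J x u ≤ S.Q J' x u := by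
  simp only [Q_eq_gbar_add_nextExp]
  gcongr
  exact S.nextExp_mono h x u

lemma bellman_mono {J J' : X → ℝ≥0∞} (h : J ≤ J') : S.bellman J ≤ S.bellman J' :=
  fun x => iInf₂_mono fun u _ => S.Q_mono h x u

lemma Qpert_eq (δ : ℝ≥0∞) (J : X → ℝ≥0∞) (x : X) (u : U) :
    S.Qpert δ J x u = S.gbar x u + (if x = S.t then 0 else δ) + S.nextExp J x u := by
  rw [Qpert, Q_eq_gbar_add_nextExp, add_right_comm]

lemma Qpert_mono (δ : ℝ≥0∞) {J J' : X → ℝ≥0∞} (h : J ≤ J') (x : X) (u : U) :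
    S.Qpert δ J x u ≤ S.Qpert δ J' x u := by
  simp only [Qpert]
  gcongr
  exact S.Q_mono h x u

lemma Qpert_add_const (δ : ℝ≥0∞) (J : X → ℝ≥0∞) (c : ℝ≥0∞) (x : X) (u : U) :
    S.Qpert δ (fun y => J y + c) x u = S.Qpert δ J x u + c := by
  rw [Qpert_eq, Qpert_eq, nextExp_add_const, ← add_assoc]

/-- Finiteness of `Q J x u` forces `J` to be finite at every successor of `x` under `u`. -/
lemma Q_le_Q_add {J J' : X → ℝ≥0∞} {K : ℝ≥0∞} (h : ∀ y, J y ≠ ⊤ → J' y ≤ K) (x : X) (u : U) :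
    S.Q J' x u ≤ S.Q J x u + K := by
  by_cases hQ : S.Q J x u = ⊤
  · simp [hQ]
  have hsucc : ∀ w, S.P x u w ≠ 0 → J (S.f x u w) ≠ ⊤ := fun w hw htop => hQ <| top_le_iff.1 <|
    calc ⊤ = S.P x u w * (S.g x u w + J (S.f x u w)) := by rw [htop, add_top, ENNReal.mul_top hw]
      _ ≤ S.Q J x u := ENNReal.le_tsum w
  rw [← PMF.tsum_mul_const (S.P x u) K, Q, Q, ← ENNReal.tsum_add]
  refine ENNReal.tsum_le_tsum fun w => ?_
  by_cases hw : S.P x u w = 0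
  · simp [hw]
  rw [← mul_add, add_assoc]
  gcongr
  exact (h _ (hsucc w hw)).trans le_add_self

lemma Q_iInf_of_antitone {J : ℕ → X → ℝ≥0∞} (hJ : Antitone J) {x : X} {u : U}
    (h0 : S.Q (J 0) x u ≠ ⊤) : S.Q (fun y => ⨅ n, J n y) x u = ⨅ n, S.Q (J n) x u := by
  simp only [Q]
  rw [← ENNReal.tsum_iInf_of_antitone
    (F := fun n w => S.P x u w * (S.g x u w + J n (S.f x u w))) (fun m n hmn w => ?_) h0]
  · refine tsum_congr fun w => ?_
    rw [ENNReal.add_iInf, ENNReal.mul_iInf fun h => absurd h ((S.P x u).apply_ne_top w)]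
  · exact mul_le_mul_right (add_le_add_right (hJ hmn _) _) _

lemma stateDist_one (π : ℕ → X → U) (x : X) :
    S.stateDist π x 1 = (S.P x (π 0 x)).map (S.f x (π 0 x)) :=
  PMF.pure_bind _ _

lemma stateDist_add (π : ℕ → X → U) (x : X) (j k : ℕ) :
    S.stateDist π x (j + k) = (S.stateDist π x j).bind fun y => S.stateDist (tail π j) y k := by
  induction k with
  | zero => exact (PMF.bind_pure _).symm
  | succ k ih =>
    rw [← Nat.add_assoc, stateDist, ih, PMF.bind_bind]
    rfl

lemma expect_zero (π : ℕ → X → U) (x : X) (J : X → ℝ≥0∞) : S.expect π x 0 J = J x :=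
  PMF.tsum_pure_mul x J

lemma expect_succ (π : ℕ → X → U) (x : X) (k : ℕ) (J : X → ℝ≥0∞) :
    S.expect π x (k + 1) J = S.expect π x k fun y => S.nextExp J y (π k y) := by
  simp only [expect, stateDist, PMF.tsum_bind_mul, PMF.tsum_map_mul, nextExp]

lemma expect_add (π : ℕ → X → U) (x : X) (j k : ℕ) (J : X → ℝ≥0∞) :
    S.expect π x (j + k) J = ∑' y, S.stateDist π x j y * S.expect (tail π j) y k J := by
  rw [expect, stateDist_add, PMF.tsum_bind_mul]
  rfl

lemma expect_mono (π : ℕ → X → U) (x : X) (k : ℕ) {J J' : X → ℝ≥0∞}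
    (h : ∀ y, S.stateDist π x k y ≠ 0 → J y ≤ J' y) : S.expect π x k J ≤ S.expect π x k J' := by
  refine ENNReal.tsum_le_tsum fun y => ?_
  by_cases hy : S.stateDist π x k y = 0
  · simp [hy]
  · exact mul_le_mul_right (h y hy) _

lemma expect_add_fun (π : ℕ → X → U) (x : X) (k : ℕ) (J J' : X → ℝ≥0∞) :
    S.expect π x k (fun y => J y + J' y) = S.expect π x k J + S.expect π x k J' := by
  simp only [expect, mul_add, ENNReal.tsum_add]

lemma expect_const (π : ℕ → X → U) (x : X) (k : ℕ) (c : ℝ≥0∞) :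
    S.expect π x k (fun _ => c) = c :=
  PMF.tsum_mul_const _ c

lemma expect_ite_const (π : ℕ → X → U) (x : X) (k : ℕ) (c : ℝ≥0∞) :
    S.expect π x k (fun y => if y = S.t then 0 else c) = c * S.r π x k := by
  rw [mul_comm, r, expect, expect, ← ENNReal.tsum_mul_right]
  simp only [mul_ite, mul_zero, mul_one, ite_mul, zero_mul]

lemma stageExp_zero (c : X → U → ℝ≥0∞) (π : ℕ → X → U) (x : X) :
    S.stageExp c π x 0 = c x (π 0 x) :=
  S.expect_zero π x _

lemma stageExp_add (c : X → U → ℝ≥0∞) (π : ℕ → X → U) (x : X) (j k : ℕ) :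
    S.stageExp c π x (j + k) = ∑' y, S.stateDist π x j y * S.stageExp c (tail π j) y k :=
  S.expect_add π x j k _

lemma stageExp_succ (c : X → U → ℝ≥0∞) (π : ℕ → X → U) (x : X) (k : ℕ) :
    S.stageExp c π x (k + 1) = S.nextExp (fun y => S.stageExp c (tail π 1) y k) x (π 0 x) := by
  rw [Nat.add_comm, stageExp_add, stateDist_one, PMF.tsum_map_mul]
  rfl

lemma totalExp_eq (c : X → U → ℝ≥0∞) (π : ℕ → X → U) (x : X) :
    S.totalExp c π x = c x (π 0 x) + S.nextExp (S.totalExp c (tail π 1)) x (π 0 x) := by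
  rw [totalExp, tsum_eq_zero_add' ENNReal.summable, stageExp_zero]
  simp only [stageExp_succ, tsum_nextExp]
  rfl

lemma stateDist_mul_totalExp_tail_le (c : X → U → ℝ≥0∞) (π : ℕ → X → U) (x y : X) (k : ℕ) :
    S.stateDist π x k y * S.totalExp c (tail π k) y ≤ S.totalExp c π x :=
  calc S.stateDist π x k y * S.totalExp c (tail π k) y
      ≤ ∑' z, S.stateDist π x k z * S.totalExp c (tail π k) z := ENNReal.le_tsum y
    _ = ∑' m, S.stageExp c π x (k + m) := by
      simp only [totalExp, stageExp_add, ← ENNReal.tsum_mul_left]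
      exact ENNReal.tsum_comm
    _ ≤ S.totalExp c π x :=
      ENNReal.tsum_comp_le_tsum_of_injective (add_right_injective k) _

lemma totalExp_add (c c' : X → U → ℝ≥0∞) (π : ℕ → X → U) (x : X) :
    S.totalExp (fun y u => c y u + c' y u) π x = S.totalExp c π x + S.totalExp c' π x := by
  simp only [totalExp, stageExp, expect_add_fun, ENNReal.tsum_add]

lemma totalExp_ite_const (c : ℝ≥0∞) (π : ℕ → X → U) (x : X) :
    S.totalExp (fun y _ => if y = S.t then 0 else c) π x = c * S.N π x := by
  simp only [totalExp, stageExp, expect_ite_const, N, ENNReal.tsum_mul_left]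

lemma Jcost_eq_totalExp : S.Jcost = S.totalExp S.gbar := rfl

lemma Jpert_eq_totalExp (δ : ℝ≥0∞) :
    S.Jpert δ = S.totalExp fun y u => S.gbar y u + if y = S.t then 0 else δ := by
  ext π x
  simp only [Jpert, stageCostPert, totalExp, stageExp, gbar, mul_add, ENNReal.tsum_add,
    PMF.tsum_mul_const]

lemma Jpert_eq (δ : ℝ≥0∞) (π : ℕ → X → U) (x : X) :
    S.Jpert δ π x = S.Jcost π x + δ * S.N π x := by
  rw [Jpert_eq_totalExp, totalExp_add, totalExp_ite_const, Jcost_eq_totalExp]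

lemma Jpert_step (δ : ℝ≥0∞) (π : ℕ → X → U) (x : X) :
    S.Jpert δ π x = S.Qpert δ (S.Jpert δ (tail π 1)) x (π 0 x) := by
  rw [Qpert_eq, Jpert_eq_totalExp, totalExp_eq]

lemma Jcost_le_mul_N {b : ℝ≥0∞} (hb : ∀ x u w, S.g x u w ≤ b) {π : ℕ → X → U}
    (hπ : S.IsPolicy π) (x : X) : S.Jcost π x ≤ b * S.N π x := by
  rw [N, ← ENNReal.tsum_mul_left]
  refine ENNReal.tsum_le_tsum fun k => ?_
  rw [← expect_ite_const]
  refine S.expect_mono π x k fun y _ => ?_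
  split_ifs with hy
  · subst hy
    simp [S.g_zero _ (hπ k S.t)]
  · exact (ENNReal.tsum_le_tsum fun w => mul_le_mul_right (hb _ _ _) _).trans
      (PMF.tsum_mul_const _ b).le

lemma tail_isPolicy {π : ℕ → X → U} (hπ : S.IsPolicy π) (k : ℕ) : S.IsPolicy (tail π k) :=
  fun m => hπ (k + m)

lemma tail_properAt {π : ℕ → X → U} {x y : X} {k : ℕ} (hp : S.ProperAt π x)
    (hy : S.stateDist π x k y ≠ 0) : S.ProperAt (tail π k) y := by
  have hfin : ∀ c, S.totalExp c π x < ⊤ → S.totalExp c (tail π k) y < ⊤ := fun c hc =>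
    lt_top_iff_ne_top.2 fun htop => by
      simpa [htop, ENNReal.mul_top hy] using
        (S.stateDist_mul_totalExp_tail_le c π x y k).trans_lt hc
  exact ⟨S.tail_isPolicy hp.1 k, hfin S.gbar hp.2.1,
    hfin (fun y _ => if y = S.t then 0 else 1) hp.2.2⟩

lemma Jhat_le_Jcost {π : ℕ → X → U} {x : X} (hp : S.ProperAt π x) : S.Jhat x ≤ S.Jcost π x :=
  iInf₂_le π hp

lemma mem_Xhat_of_stateDist_ne_zero {π : ℕ → X → U} {x y : X} {k : ℕ} (hp : S.ProperAt π x)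
    (hy : S.stateDist π x k y ≠ 0) : y ∈ S.Xhat :=
  have hpy := S.tail_properAt hp hy
  (S.Jhat_le_Jcost hpy).trans_lt hpy.2.1

lemma expect_add_nextExp (c : X → U → ℝ≥0∞) (J : X → ℝ≥0∞) (π : ℕ → X → U) (x : X) (k : ℕ) :
    S.expect π x k (fun y => c y (π k y) + S.nextExp J y (π k y))
      = S.stageExp c π x k + S.expect π x (k + 1) J := by
  rw [expect_add_fun, expect_succ]
  rfl

lemma le_sum_stageExp_add_expect {c : X → U → ℝ≥0∞} {V : ℕ → X → ℝ≥0∞} {π : ℕ → X → U}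
    (hV : ∀ n m y, V (n + 1) y ≤ c y (π m y) + S.nextExp (V n) y (π m y)) (k n : ℕ) (x : X) :
    V (n + k) x ≤ ∑ m ∈ Finset.range k, S.stageExp c π x m + S.expect π x k (V n) := by
  induction k generalizing n with
  | zero => simp [expect_zero]
  | succ k ih =>
    calc V (n + (k + 1)) x = V (n + 1 + k) x := by rw [Nat.add_right_comm, Nat.add_assoc]
      _ ≤ ∑ m ∈ Finset.range k, S.stageExp c π x m + S.expect π x k (V (n + 1)) := ih (n + 1)
      _ ≤ ∑ m ∈ Finset.range k, S.stageExp c π x m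
          + S.expect π x k (fun y => c y (π k y) + S.nextExp (V n) y (π k y)) := by
        gcongr
        exact S.expect_mono π x k fun y _ => hV n k y
      _ = _ := by rw [expect_add_nextExp, Finset.sum_range_succ, add_assoc]

lemma sum_stageExp_add_expect_le {c : X → U → ℝ≥0∞} {J : X → ℝ≥0∞} {π : ℕ → X → U}
    {ε : ℕ → ℝ≥0∞} (h : ∀ m y, c y (π m y) + S.nextExp J y (π m y) ≤ J y + ε m) (k : ℕ) (x : X) :
    ∑ m ∈ Finset.range k, S.stageExp c π x m + S.expect π x k J
      ≤ J x + ∑ m ∈ Finset.range k, ε m := by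
  induction k with
  | zero => simp [expect_zero]
  | succ k ih =>
    calc ∑ m ∈ Finset.range (k + 1), S.stageExp c π x m + S.expect π x (k + 1) J
        = ∑ m ∈ Finset.range k, S.stageExp c π x m
          + S.expect π x k (fun y => c y (π k y) + S.nextExp J y (π k y)) := by
          rw [expect_add_nextExp, Finset.sum_range_succ, add_assoc]
      _ ≤ ∑ m ∈ Finset.range k, S.stageExp c π x m + S.expect π x k (fun y => J y + ε k) := by
        gcongr
        exact S.expect_mono π x k fun y _ => h k y
      _ = ∑ m ∈ Finset.range k, S.stageExp c π x m + S.expect π x k J + ε k := by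
        rw [expect_add_fun, expect_const, add_assoc]
      _ ≤ J x + ∑ m ∈ Finset.range (k + 1), ε m := by
        rw [Finset.sum_range_succ, ← add_assoc]
        gcongr

lemma totalExp_le_add_tsum {c : X → U → ℝ≥0∞} {J : X → ℝ≥0∞} {π : ℕ → X → U}
    {ε : ℕ → ℝ≥0∞} (h : ∀ m y, c y (π m y) + S.nextExp J y (π m y) ≤ J y + ε m) (x : X) :
    S.totalExp c π x ≤ J x + ∑' m, ε m := by
  rw [totalExp, ENNReal.tsum_eq_iSup_nat]
  refine iSup_le fun k => ?_
  calc ∑ m ∈ Finset.range k, S.stageExp c π x m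
      ≤ ∑ m ∈ Finset.range k, S.stageExp c π x m + S.expect π x k J := le_self_add
    _ ≤ J x + ∑ m ∈ Finset.range k, ε m := S.sum_stageExp_add_expect_le h k x
    _ ≤ J x + ∑' m, ε m := by
      gcongr
      exact ENNReal.sum_le_tsum _

lemma exists_selector_le {F : X → U → ℝ≥0∞} {J : X → ℝ≥0∞} (hF : ∀ x, ⨅ u ∈ S.Uc x, F x u ≤ J x)
    {ε : ℝ≥0∞} (hε : ε ≠ 0) : ∃ μ : X → U, (∀ x, μ x ∈ S.Uc x) ∧ ∀ x, F x (μ x) ≤ J x + ε := by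
  have hex : ∀ x, ∃ u ∈ S.Uc x, F x u ≤ J x + ε := fun x => by
    by_cases hJ : J x = ⊤
    · obtain ⟨u, hu⟩ := S.Uc_nonempty x
      exact ⟨u, hu, by simp [hJ]⟩
    · have hlt := (hF x).trans_lt (ENNReal.lt_add_right hJ hε)
      simp only [iInf_lt_iff, exists_prop] at hlt
      obtain ⟨u, hu, hlt⟩ := hlt
      exact ⟨u, hu, hlt.le⟩
  choose μ hμ hμle using hex
  exact ⟨μ, hμ, hμle⟩

lemma JhatPert_le (δ : ℝ≥0∞) {π : ℕ → X → U} (hπ : S.IsPolicy π) (x : X) :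
    S.JhatPert δ x ≤ S.Jpert δ π x :=
  iInf₂_le π hπ

lemma iInf_Qpert_JhatPert_le (δ : ℝ≥0∞) (x : X) :
    ⨅ u ∈ S.Uc x, S.Qpert δ (S.JhatPert δ) x u ≤ S.JhatPert δ x :=
  le_iInf₂ fun π hπ => calc
    ⨅ u ∈ S.Uc x, S.Qpert δ (S.JhatPert δ) x u ≤ S.Qpert δ (S.JhatPert δ) x (π 0 x) :=
      iInf₂_le _ (hπ 0 x)
    _ ≤ S.Qpert δ (S.Jpert δ (tail π 1)) x (π 0 x) :=
      S.Qpert_mono δ (S.JhatPert_le δ (S.tail_isPolicy hπ 1)) x _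
    _ = S.Jpert δ π x := (S.Jpert_step δ π x).symm

/-- Concatenate selectors whose errors `ε' k` sum to less than `ε`. -/
lemma exists_isPolicy_Jpert_le (δ : ℝ≥0∞) {ε : ℝ≥0∞} (hε : ε ≠ 0) :
    ∃ σ : ℕ → X → U, S.IsPolicy σ ∧ ∀ x, S.Jpert δ σ x ≤ S.JhatPert δ x + ε := by
  obtain ⟨ε', hε'pos, hε'sum⟩ := ENNReal.exists_pos_sum_of_countable' hε ℕ
  choose σ hσ hσle using fun k =>
    S.exists_selector_le (S.iInf_Qpert_JhatPert_le δ) (hε'pos k).ne'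
  refine ⟨σ, hσ, fun x => ?_⟩
  rw [Jpert_eq_totalExp]
  refine (S.totalExp_le_add_tsum (fun m y => ?_) x).trans (by gcongr)
  rw [← Qpert_eq]
  exact hσle m y

lemma JhatPert_le_Qpert (δ : ℝ≥0∞) {x : X} {u : U} (hu : u ∈ S.Uc x) :
    S.JhatPert δ x ≤ S.Qpert δ (S.JhatPert δ) x u := by
  refine ENNReal.le_of_forall_pos_le_add fun ε hε _ => ?_
  obtain ⟨σ, hσ, hσle⟩ := S.exists_isPolicy_Jpert_le δ (ENNReal.coe_ne_zero.2 hε.ne')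
  let π : ℕ → X → U := fun
    | 0 => Function.update (σ 0) x u
    | k + 1 => σ k
  have hπ : S.IsPolicy π := by
    rintro (_ | k) y
    · by_cases hy : y = x
      · subst hy
        simpa [π] using hu
      · simpa [π, hy] using hσ 0 y
    · exact hσ k y
  have htail : tail π 1 = σ := funext fun k => by simp [tail, π, Nat.add_comm 1 k]
  calc S.JhatPert δ x ≤ S.Jpert δ π x := S.JhatPert_le δ hπ x
    _ = S.Qpert δ (S.Jpert δ σ) x u := by rw [Jpert_step, htail]; simp [π]
    _ ≤ S.Qpert δ (fun y => S.JhatPert δ y + ε) x u := S.Qpert_mono δ hσle x u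
    _ = S.Qpert δ (S.JhatPert δ) x u + ε := S.Qpert_add_const δ _ _ x u

/-- For `δ > 0` a policy of finite perturbed cost is proper, since `Jpert δ = Jcost + δ N`. -/
lemma Jhat_le_JhatPert {δ : ℝ≥0∞} (hδ : δ ≠ 0) (x : X) : S.Jhat x ≤ S.JhatPert δ x := by
  refine ENNReal.le_of_forall_pos_le_add fun ε hε hlt => ?_
  obtain ⟨σ, hσ, hσle⟩ := S.exists_isPolicy_Jpert_le δ (ENNReal.coe_ne_zero.2 hε.ne')
  have hfin : S.Jcost σ x + δ * S.N σ x < ⊤ := by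
    rw [← Jpert_eq]
    exact (hσle x).trans_lt (ENNReal.add_lt_top.2 ⟨hlt, ENNReal.coe_lt_top⟩)
  obtain ⟨hJ, hN⟩ := ENNReal.add_lt_top.1 hfin
  have hp : S.ProperAt σ x :=
    ⟨hσ, hJ, lt_top_iff_ne_top.2 fun h => by simp [h, ENNReal.mul_top hδ] at hN⟩
  calc S.Jhat x ≤ S.Jcost σ x := S.Jhat_le_Jcost hp
    _ ≤ S.Jpert δ σ x := S.Jpert_eq δ σ x ▸ le_self_add
    _ ≤ S.JhatPert δ x + ε := hσle x

lemma JhatPert_mono {δ δ' : ℝ≥0∞} (h : δ ≤ δ') : S.JhatPert δ ≤ S.JhatPert δ' := fun x =>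
  iInf₂_mono fun π _ => by
    rw [Jpert_eq, Jpert_eq]
    gcongr

lemma JhatPert_le_mul_N {b : ℝ≥0∞} (hb : ∀ x u w, S.g x u w ≤ b) {π : ℕ → X → U}
    (hπ : S.IsPolicy π) (δ : ℝ≥0∞) (x : X) : S.JhatPert δ x ≤ (b + δ) * S.N π x :=
  calc S.JhatPert δ x ≤ S.Jcost π x + δ * S.N π x := S.Jpert_eq δ π x ▸ S.JhatPert_le δ hπ x
    _ ≤ b * S.N π x + δ * S.N π x := by gcongr; exact S.Jcost_le_mul_N hb hπ x
    _ = (b + δ) * S.N π x := (add_mul _ _ _).symm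

lemma iInf_JhatPert_eq_Jhat {δ : ℕ → ℝ≥0∞} (hδ0 : ∀ n, δ n ≠ 0)
    (hδ : Tendsto δ atTop (nhds 0)) (x : X) : ⨅ n, S.JhatPert (δ n) x = S.Jhat x := by
  refine le_antisymm (le_iInf₂ fun π hp => ?_) (le_iInf fun n => S.Jhat_le_JhatPert (hδ0 n) x)
  have hlim : Tendsto (fun n => S.Jcost π x + δ n * S.N π x) atTop
      (nhds (S.Jcost π x + 0 * S.N π x)) :=
    tendsto_const_nhds.add (ENNReal.Tendsto.mul_const hδ (Or.inr hp.2.2.ne))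
  rw [zero_mul, add_zero] at hlim
  exact ge_of_tendsto' hlim fun n =>
    (iInf_le _ n).trans (S.Jpert_eq (δ n) π x ▸ S.JhatPert_le (δ n) hp.1 x)

lemma Q_JhatPert_ne_top (hb : S.BoundedCost) (hup : ∃ π, S.UniformlyProper π) {δ : ℝ≥0∞}
    (hδ : δ ≠ ⊤) {x : X} {u : U} (hQ : S.Q S.Jhat x u ≠ ⊤) : S.Q (S.JhatPert δ) x u ≠ ⊤ := by
  obtain ⟨b, hb, hbg⟩ := hb
  obtain ⟨π, hπ, hN⟩ := hup
  refine ne_top_of_le_ne_top ?_ (S.Q_le_Q_add (J := S.Jhat) (K := (b + δ) * ⨆ y ∈ S.Xhat, S.N π y)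
    (fun y hy => (S.JhatPert_le_mul_N hbg hπ δ y).trans ?_) x u)
  · exact ENNReal.add_ne_top.2 ⟨hQ, ENNReal.mul_ne_top (ENNReal.add_ne_top.2 ⟨hb.ne, hδ⟩) hN.ne⟩
  · gcongr
    exact le_biSup (S.N π) (lt_top_iff_ne_top.2 hy)

/-- Letting `δ ↓ 0` in `Ĵ ≤ Ĵ_δ ≤ Q Ĵ_δ + δ`; monotone convergence under `Q` applies because
`Ĵ_δ` is bounded on `X̂` by the uniformly proper policy. -/
lemma Jhat_le_Q (hb : S.BoundedCost) (hup : ∃ π, S.UniformlyProper π) {x : X} {u : U}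
    (hu : u ∈ S.Uc x) : S.Jhat x ≤ S.Q S.Jhat x u := by
  by_cases hQ : S.Q S.Jhat x u = ⊤
  · simp [hQ]
  let δ : ℕ → ℝ≥0∞ := fun n => ((n + 1 : ℕ) : ℝ≥0∞)⁻¹
  have hδ0 : ∀ n, δ n ≠ 0 := fun n => ENNReal.inv_ne_zero.2 (ENNReal.natCast_ne_top _)
  have hδlim : Tendsto δ atTop (nhds 0) :=
    ENNReal.tendsto_inv_nat_nhds_zero.comp (tendsto_add_atTop_nat 1)
  have hJanti : Antitone fun n => S.JhatPert (δ n) := fun m n h =>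
    S.JhatPert_mono (ENNReal.inv_le_inv.2 (by exact_mod_cast Nat.succ_le_succ h))
  have hlim : ⨅ n, S.Q (S.JhatPert (δ n)) x u = S.Q S.Jhat x u := by
    rw [← S.Q_iInf_of_antitone hJanti (S.Q_JhatPert_ne_top hb hup (by simp [δ]) hQ)]
    simp_rw [S.iInf_JhatPert_eq_Jhat hδ0 hδlim]
  have hconv : Tendsto (fun n => S.Q (S.JhatPert (δ n)) x u + δ n) atTop
      (nhds (S.Q S.Jhat x u + 0)) := by
    rw [← hlim]
    exact (tendsto_atTop_iInf fun m n h => S.Q_mono (hJanti h) x u).add hδlim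
  rw [add_zero] at hconv
  refine ge_of_tendsto' hconv fun n => ?_
  calc S.Jhat x ≤ S.JhatPert (δ n) x := S.Jhat_le_JhatPert (hδ0 n) x
    _ ≤ S.Qpert (δ n) (S.JhatPert (δ n)) x u := S.JhatPert_le_Qpert _ hu
    _ ≤ S.Q (S.JhatPert (δ n)) x u + δ n := by
      rw [Qpert]
      gcongr
      split_ifs <;> simp

lemma Jhat_le_bellman_Jhat (hb : S.BoundedCost) (hup : ∃ π, S.UniformlyProper π) :
    S.Jhat ≤ S.bellman S.Jhat :=
  fun _ => le_iInf₂ fun _ hu => S.Jhat_le_Q hb hup hu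

lemma expect_le_iSup_mul_r {J : X → ℝ≥0∞} (hJ : J S.t = 0) {π : ℕ → X → U} {x : X}
    (hp : S.ProperAt π x) (k : ℕ) : S.expect π x k J ≤ (⨆ y ∈ S.Xhat, J y) * S.r π x k := by
  rw [← expect_ite_const]
  refine S.expect_mono π x k fun y hy => ?_
  split_ifs with hyt
  · rw [hyt, hJ]
  · exact le_biSup J (S.mem_Xhat_of_stateDist_ne_zero hp hy)

lemma valueIteration_le_sum_stageCost_add_expect {Jseq : ℕ → X → ℝ≥0∞}
    (hVI : ∀ k x, Jseq (k + 1) x = S.bellman (Jseq k) x)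
    {π : ℕ → X → U} (hπ : S.IsPolicy π) (k : ℕ) (x : X) :
    Jseq k x ≤ ∑ m ∈ Finset.range k, S.stageCost π x m + S.expect π x k (Jseq 0) := by
  have hV : ∀ n m y, Jseq (n + 1) y ≤ S.gbar y (π m y) + S.nextExp (Jseq n) y (π m y) :=
    fun n m y => by
      rw [hVI, ← Q_eq_gbar_add_nextExp]
      exact iInf₂_le _ (hπ m y)
  have h := S.le_sum_stageExp_add_expect hV k 0 x
  rw [Nat.zero_add] at h
  exact h

lemma limsup_valueIteration_le_Jhat {Jseq : ℕ → X → ℝ≥0∞} (h0 : Jseq 0 ∈ S.Bset)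
    (hVI : ∀ k x, Jseq (k + 1) x = S.bellman (Jseq k) x) (x : X) :
    limsup (fun k => Jseq k x) atTop ≤ S.Jhat x := by
  refine le_iInf₂ fun π hp => ?_
  set C := ⨆ y ∈ S.Xhat, Jseq 0 y
  have hbound : ∀ k, Jseq k x ≤ S.Jcost π x + C * S.r π x k := fun k =>
    (S.valueIteration_le_sum_stageCost_add_expect hVI hp.1 k x).trans
      (add_le_add (ENNReal.sum_le_tsum _) (S.expect_le_iSup_mul_r h0.1 hp k))
  have hlim : Tendsto (fun k => S.Jcost π x + C * S.r π x k) atTop (nhds (S.Jcost π x)) := by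
    simpa using tendsto_const_nhds.add (ENNReal.Tendsto.const_mul
      (ENNReal.tendsto_atTop_zero_of_tsum_ne_top hp.2.2.ne) (Or.inr h0.2.ne))
  exact (limsup_le_limsup (Eventually.of_forall hbound)).trans hlim.limsup_eq.le

end SSP

/-- If `g` is bounded and a uniformly proper policy exists, value
iteration started from any `J₀ ∈ B` with `J₀ ≥ Ĵ` converges pointwise to `Ĵ`. -/
theorem VI_converges_from_Bset {X U W : Type*} [Countable W] (S : SSP X U W)
    (hb : S.BoundedCost) (hup : ∃ π : ℕ → X → U, S.UniformlyProper π)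
    (Jseq : ℕ → X → ℝ≥0∞) (h0 : Jseq 0 ∈ S.Bset) (h0ge : S.Jhat ≤ Jseq 0)
    (hVI : ∀ k x, Jseq (k + 1) x = S.bellman (Jseq k) x) :
    ∀ x, Tendsto (fun k => Jseq k x) atTop (nhds (S.Jhat x)) := by
  have hlow : ∀ k, S.Jhat ≤ Jseq k := by
    intro k
    induction k with
    | zero => exact h0ge
    | succ k ih =>
      intro y
      rw [hVI]
      exact S.Jhat_le_bellman_Jhat hb hup y |>.trans (S.bellman_mono ih y)
  intro x
  exact tendsto_of_le_liminf_of_limsup_le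
    (le_liminf_of_le (by isBoundedDefault) (Eventually.of_forall fun k => hlow k x))
    (S.limsup_valueIteration_le_Jhat h0 hVI x)
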